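/- arXiv:2309.05511 — 6 statements merged into one kernel-verified Lean document; each statement's English description precedes it below -/
import Mathlib

section
/- Let k be an algebraically closed field and A a Z-graded commutative domain over k such that A_i ≠ 0 and A_{-j} ≠ 0 for some positive integers i, j, and A_k is nonzero and finite-dimensional over k for some integer k. Then A is isomorphic as a graded algebra to the Laurent polynomial ring k[s^{±1}] for some nonzero homogeneous element s of A of positive degree. -/
/-!
Multiplication by a nonzero element of degree `n` embeds `A₀` into the finite-dimensional `Aₙ`, so
`A₀` is a finite-dimensional domain over the algebraically closed field `k`, i.e. `A₀ = k`. Hence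
if `a ∈ Aₙ` and `b ∈ A₋ₙ` are nonzero, `a * b` is a nonzero scalar and `a` is a unit. The degrees
of nonzero homogeneous elements form a submonoid of `ℤ` containing a positive and a negative
number, hence a subgroup `dℤ` with `d > 0`, and a unit `u` of degree `d` spans each `A_{dm}` by
`u ^ m`.
-/

open SetLike

theorem AddSubmonoid.neg_mem_of_pos_mem_of_neg_mem (S : AddSubmonoid ℤ) {p q m : ℤ}
    (hp : p ∈ S) (hp0 : 0 < p) (hq : q ∈ S) (hq0 : q < 0) (hm : m ∈ S) : -m ∈ S := by
  rcases le_or_gt 0 m with hm0 | hm0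
  · have : -m = m.toNat • q + (-q - 1).toNat • m := by
      simp only [nsmul_eq_mul, Int.toNat_of_nonneg hm0,
        Int.toNat_of_nonneg (by omega : 0 ≤ -q - 1)]
      ring
    exact this ▸ S.add_mem (S.nsmul_mem hq _) (S.nsmul_mem hm _)
  · have : -m = (-m).toNat • p + (p - 1).toNat • m := by
      simp only [nsmul_eq_mul, Int.toNat_of_nonneg (by omega : 0 ≤ -m),
        Int.toNat_of_nonneg (by omega : 0 ≤ p - 1)]
      ring
    exact this ▸ S.add_mem (S.nsmul_mem hp _) (S.nsmul_mem hm _)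

theorem AddSubgroup.exists_pos_forall_mem_iff_dvd (H : AddSubgroup ℤ) (hH : H ≠ ⊥) :
    ∃ d : ℤ, 0 < d ∧ ∀ n, n ∈ H ↔ d ∣ n := by
  obtain ⟨g, rfl⟩ := Int.subgroup_cyclic H
  have hg : g ≠ 0 := by rintro rfl; exact hH AddSubgroup.closure_singleton_zero
  refine ⟨g.natAbs, by omega, fun n => ?_⟩
  rw [← AddSubgroup.zmultiples_eq_closure, ← Int.zmultiples_natAbs, Int.mem_zmultiples_iff]

theorem SetLike.val_zpow_mem_graded {ι σ R : Type*} [AddGroup ι] [Monoid R] [SetLike σ R]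
    (𝒜 : ι → σ) [GradedMonoid 𝒜] {d : ι} {u : Rˣ} (hu : ↑u ∈ 𝒜 d) (hu' : ↑u⁻¹ ∈ 𝒜 (-d))
    (m : ℤ) : ↑(u ^ m) ∈ 𝒜 (m • d) := by
  refine Int.induction_on m ?_ (fun m ih => ?_) (fun m ih => ?_)
  · simpa using one_mem_graded 𝒜
  · rw [zpow_add_one, Units.val_mul, add_zsmul, one_zsmul]
    exact mul_mem_graded ih hu
  · rw [zpow_sub_one, Units.val_mul, sub_eq_add_neg, add_zsmul, neg_one_zsmul]
    exact mul_mem_graded ih hu'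

section Graded

variable {ι k A : Type*} [Field k]

def nonzeroGrades [AddMonoid ι] [Ring A] [NoZeroDivisors A] [Nontrivial A] [Algebra k A]
    (𝒜 : ι → Submodule k A) [GradedMonoid 𝒜] : AddSubmonoid ι where
  carrier := {n | 𝒜 n ≠ ⊥}
  zero_mem' := (Submodule.ne_bot_iff _).2 ⟨1, one_mem_graded 𝒜, one_ne_zero⟩
  add_mem' {_ _} ha hb := by
    obtain ⟨a, ha, ha0⟩ := (Submodule.ne_bot_iff _).1 ha
    obtain ⟨b, hb, hb0⟩ := (Submodule.ne_bot_iff _).1 hb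
    exact (Submodule.ne_bot_iff _).2 ⟨a * b, mul_mem_graded ha hb, mul_ne_zero ha0 hb0⟩

theorem Module.Finite.of_finite_grade_add [AddMonoid ι] [Ring A] [NoZeroDivisors A]
    [Algebra k A] (𝒜 : ι → Submodule k A) [GradedMonoid 𝒜] {n : ι} (hn : 𝒜 n ≠ ⊥) (m : ι)
    [Module.Finite k (𝒜 (n + m))] : Module.Finite k (𝒜 m) := by
  obtain ⟨t, ht, ht0⟩ := (Submodule.ne_bot_iff _).1 hn
  let f : 𝒜 m →ₗ[k] 𝒜 (n + m) :=
    (LinearMap.mulLeft k t).restrict fun _ hz => mul_mem_graded ht hz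
  exact Module.Finite.of_injective f fun z w h => Subtype.ext (mul_left_cancel₀ ht0 congr(($h).1))

theorem grade_zero_eq_one [IsAlgClosed k] [AddMonoid ι] [Ring A] [IsDomain A] [Algebra k A]
    (𝒜 : ι → Submodule k A) [GradedMonoid 𝒜] [Module.Finite k (𝒜 0)] : 𝒜 0 = 1 := by
  have : Module.Finite k (GradeZero.subalgebra 𝒜) := ‹Module.Finite k (𝒜 0)›
  have : Algebra.IsIntegral k (GradeZero.subalgebra 𝒜) := Algebra.IsIntegral.of_finite k _
  refine le_antisymm (fun z hz => ?_) (Submodule.one_le.2 (one_mem_graded 𝒜))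
  obtain ⟨c, hc⟩ := (IsAlgClosed.algebraMap_bijective_of_isIntegral
    (k := k) (K := GradeZero.subalgebra 𝒜)).2 ⟨z, hz⟩
  exact Submodule.mem_one.2 ⟨c, congr(($hc).1)⟩

variable [AddGroup ι] [CommRing A] [Algebra k A] {𝒜 : ι → Submodule k A} [GradedMonoid 𝒜]

theorem exists_algebraMap_eq_mul_of_mem_grade_neg (h0 : 𝒜 0 = 1) {n : ι} {a b : A}
    (ha : a ∈ 𝒜 n) (hb : b ∈ 𝒜 (-n)) : ∃ c : k, algebraMap k A c = a * b :=
  Submodule.mem_one.1 (h0 ▸ add_neg_cancel n ▸ mul_mem_graded ha hb)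

theorem exists_unit_of_mem_grade_neg (h0 : 𝒜 0 = 1) {n : ι} {a b : A}
    (ha : a ∈ 𝒜 n) (hb : b ∈ 𝒜 (-n)) (hab : a * b ≠ 0) :
    ∃ u : Aˣ, ↑u = a ∧ ↑u⁻¹ ∈ 𝒜 (-n) := by
  obtain ⟨c, hc⟩ := exists_algebraMap_eq_mul_of_mem_grade_neg h0 ha hb
  have hc0 : c ≠ 0 := by rintro rfl; exact hab (by rw [← hc, map_zero])
  have h : a * (c⁻¹ • b) = 1 := by
    rw [mul_smul_comm, ← hc, Algebra.smul_def, ← map_mul, inv_mul_cancel₀ hc0, map_one]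
  exact ⟨⟨a, c⁻¹ • b, h, mul_comm a _ ▸ h⟩, rfl, Submodule.smul_mem _ _ hb⟩

theorem exists_eq_smul_of_inv_mem_grade_neg (h0 : 𝒜 0 = 1) {n : ι} {a : A} {u : Aˣ}
    (ha : a ∈ 𝒜 n) (hu : ↑u⁻¹ ∈ 𝒜 (-n)) : ∃ c : k, a = c • (u : A) := by
  obtain ⟨c, hc⟩ := exists_algebraMap_eq_mul_of_mem_grade_neg h0 ha hu
  exact ⟨c, by rw [Algebra.smul_def, hc, mul_assoc, Units.inv_mul, mul_one]⟩

end Graded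
/-- let `k` be an algebraically closed field and `A` a `ℤ`-graded
commutative domain over `k` (graded by `𝒜`) such that `𝒜 i ≠ 0` and `𝒜 (-j) ≠ 0`
for some positive `i, j`, and some component `𝒜 n` is nonzero and
finite-dimensional over `k`.  Then `A` is isomorphic as a graded algebra to the
Laurent polynomial ring `k[s^{±1}]` for a nonzero homogeneous element `s` of
positive degree `d`: concretely, `s` is a unit `u` with `(u : A) ∈ 𝒜 d`, and
every nonzero homogeneous element of degree `n` is a scalar multiple of the
(integer) power `u ^ m` where `n = d * m`. -/
theorem stmt0 (k A : Type*) [Field k] [IsAlgClosed k] [CommRing A] [IsDomain A]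
    [Algebra k A] (𝒜 : ℤ → Submodule k A) [GradedAlgebra 𝒜]
    (hpos : ∃ i : ℤ, 0 < i ∧ 𝒜 i ≠ ⊥) (hneg : ∃ j : ℤ, 0 < j ∧ 𝒜 (-j) ≠ ⊥)
    (hfin : ∃ n : ℤ, 𝒜 n ≠ ⊥ ∧ Module.Finite k (𝒜 n)) :
    ∃ (d : ℤ) (u : Aˣ), 0 < d ∧ (u : A) ∈ 𝒜 d ∧
      ∀ (n : ℤ) (a : A), a ∈ 𝒜 n → a ≠ 0 →
        ∃ (m : ℤ) (c : k), n = d * m ∧ a = c • ((u ^ m : Aˣ) : A) := by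
  obtain ⟨i, hi, hAi⟩ := hpos
  obtain ⟨j, hj, hAj⟩ := hneg
  obtain ⟨n₀, hn₀, hfin₀⟩ := hfin
  have : Module.Finite k (𝒜 (n₀ + 0)) := by rwa [add_zero]
  have : Module.Finite k (𝒜 0) := Module.Finite.of_finite_grade_add 𝒜 hn₀ 0
  have h0 : 𝒜 0 = 1 := grade_zero_eq_one 𝒜
  let H : AddSubgroup ℤ :=
    { nonzeroGrades 𝒜 with
      neg_mem' := (nonzeroGrades 𝒜).neg_mem_of_pos_mem_of_neg_mem hAi hi hAj (neg_neg_of_pos hj) }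
  have hH_ne_bot : H ≠ ⊥ := fun h => hi.ne' (AddSubgroup.mem_bot.1 (h ▸ hAi))
  obtain ⟨d, hd, hH⟩ := H.exists_pos_forall_mem_iff_dvd hH_ne_bot
  obtain ⟨s, hs, hs0⟩ := (Submodule.ne_bot_iff _).1 ((hH d).2 dvd_rfl)
  obtain ⟨t, ht, ht0⟩ := (Submodule.ne_bot_iff _).1 (H.neg_mem ((hH d).2 dvd_rfl))
  obtain ⟨u, rfl, hu⟩ := exists_unit_of_mem_grade_neg h0 hs ht (mul_ne_zero hs0 ht0)
  refine ⟨d, u, hd, hs, fun n a ha ha0 => ?_⟩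
  obtain ⟨m, rfl⟩ := (hH n).1 ((Submodule.ne_bot_iff _).2 ⟨a, ha, ha0⟩)
  have hu_inv : ↑(u ^ m)⁻¹ ∈ 𝒜 (-(d * m)) := by
    simpa [← zpow_neg, mul_comm] using val_zpow_mem_graded 𝒜 hs hu (-m)
  exact ⟨m, exists_eq_smul_of_inv_mem_grade_neg h0 ha hu_inv |>.imp fun _ h => ⟨rfl, h⟩⟩
end

section
/- Let k be a field of characteristic zero and K a Poisson field over k. If x, y ∈ K are algebraically dependent over k, then {x, y} = 0. -/
/-!
The centralizer of `x` is the field of constants of the Hamiltonian derivation `{x, -}`, and in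
characteristic zero a derivation kills every element algebraic over its constants: applying it
to the minimal polynomial `f` of `y` gives `f'(y) · D y = 0`, and `f'(y) ≠ 0` by separability.
If `x` is algebraic over `k`, it is therefore killed by `{y, -}`; otherwise dependence makes `y`
algebraic over `k[x]`, which lies in the centralizer of `x`.
-/

/-- A Poisson bracket on a commutative algebra `A` over `k`: a `k`-bilinear
antisymmetric bracket satisfying the Jacobi identity and the Leibniz rule.
A *Poisson field* is a field equipped with such a bracket. -/
structure PoissonBracket (k A : Type*) [CommRing k] [CommRing A] [Algebra k A] where
  bracket : A → A → A
  add_left : ∀ a b c : A, bracket (a + b) c = bracket a c + bracket b c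
  smul_left : ∀ (r : k) (a b : A), bracket (r • a) b = r • bracket a b
  antisymm : ∀ a b : A, bracket a b = - bracket b a
  leibniz : ∀ a b c : A, bracket a (b * c) = bracket a b * c + bracket a c * b
  jacobi : ∀ a b c : A,
    bracket a (bracket b c) + bracket b (bracket c a) + bracket c (bracket a b) = 0

open Polynomial

namespace Derivation

variable {k K : Type*} [Field k] [Field K] [Algebra k K]

def constants (D : Derivation k K K) : IntermediateField k K where
  carrier := {a | D a = 0}
  mul_mem' {a b} ha hb := by simp_all
  add_mem' {a b} ha hb := by simp_all
  algebraMap_mem' := D.map_algebraMap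
  inv_mem' a ha := by simp_all [leibniz_inv]

theorem mem_constants_of_isAlgebraic [CharZero K] (D : Derivation k K K) {y : K}
    (hy : IsAlgebraic D.constants y) : y ∈ D.constants := by
  set f := minpoly D.constants y
  have hsep : f.Separable := (minpoly.irreducible hy.isIntegral).separable
  have hcoeff : (D.compAlgebraMap D.constants).mapCoeffs f = 0 := by
    ext i
    exact (f.coeff i).2
  have h := D.apply_aeval_eq y f
  rw [minpoly.aeval, map_zero, hcoeff] at h
  simp only [map_zero, zero_add, smul_eq_mul] at h
  exact (mul_eq_zero.1 h.symm).resolve_left (hsep.aeval_derivative_ne_zero (minpoly.aeval _ _))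

end Derivation

theorem isAlgebraic_or_isAlgebraic_adjoin_of_not_algebraicIndependent {k K : Type*} [CommRing k]
    [CommRing K] [Algebra k K] {x y : K} (h : ¬ AlgebraicIndependent k ![x, y]) :
    IsAlgebraic k x ∨ IsAlgebraic (Algebra.adjoin k {x}) y := by
  contrapose! h
  have hpair : ![x, y] = (fun o : Option (Fin 1) ↦ o.elim y ![x]) ∘ finSuccEquiv' 1 := by
    ext i; fin_cases i <;> rfl
  rw [hpair, algebraicIndependent_equiv, AlgebraicIndependent.option_iff,
    algebraicIndependent_iff_transcendental, Matrix.range_cons, Matrix.range_empty,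
    Set.union_empty]
  exact h

namespace PoissonBracket

variable {k A : Type*} [CommRing k] [CommRing A] [Algebra k A] (P : PoissonBracket k A)

def hamiltonian (x : A) : Derivation k A A where
  toFun := P.bracket x
  map_add' a b := by
    rw [P.antisymm x (a + b), P.add_left, neg_add, ← P.antisymm, ← P.antisymm]
  map_smul' r a := by
    change P.bracket x (r • a) = r • P.bracket x a
    rw [P.antisymm x (r • a), P.smul_left, ← smul_neg, ← P.antisymm]
  map_one_eq_zero' := by simpa using P.leibniz x 1 1
  leibniz' a b := by
    change P.bracket x (a * b) = a • P.bracket x b + b • P.bracket x a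
    rw [P.leibniz, smul_eq_mul, smul_eq_mul]
    ring

theorem bracket_self [IsAddTorsionFree A] (a : A) : P.bracket a a = 0 :=
  self_eq_neg.mp (P.antisymm a a)

end PoissonBracket

/-- over a field `k` of characteristic zero, if two elements `x, y`
of a Poisson field `K` are algebraically dependent over `k`, then `{x, y} = 0`. -/
theorem stmt3 (k K : Type*) [Field k] [CharZero k] [Field K] [Algebra k K]
    (P : PoissonBracket k K) (x y : K)
    (hdep : ¬ AlgebraicIndependent k ![x, y]) :
    P.bracket x y = 0 := by
  have : CharZero K := charZero_of_injective_algebraMap (algebraMap k K).injective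
  rcases isAlgebraic_or_isAlgebraic_adjoin_of_not_algebraicIndependent hdep with hx | hy
  · have hyx : P.bracket y x = 0 :=
      (P.hamiltonian y).mem_constants_of_isAlgebraic (hx.tower_top _)
    rw [P.antisymm, hyx, neg_zero]
  · have hle : Algebra.adjoin k {x} ≤ (P.hamiltonian x).constants.toSubalgebra :=
      Algebra.adjoin_le (Set.singleton_subset_iff.2 (P.bracket_self x))
    exact (P.hamiltonian x).mem_constants_of_isAlgebraic (hy.tower_top_of_subalgebra_le hle)
end

section
/- Let A be a Poisson domain with fraction field Q and let deg be the valuation on A coming from a good w-filtration F of A (i.e., gr_F A is a domain and {F_i,F_j} ⊆ F_{i+j-w}). Define deg_Q(a b^{-1}) = deg(a) − deg(b) for a ∈ A, b ∈ A\{0}. Then deg_Q is a well-defined w-valuation on Q: for all u,v ∈ Q, deg_Q({u,v}) ≥ deg_Q(u) + deg_Q(v) − w. -/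
namespace PoissonBracket

section CommRing

variable {k R : Type*} [CommRing k] [CommRing R] [Algebra k R] (P : PoissonBracket k R)

theorem zero_left (b : R) : P.bracket 0 b = 0 := by
  simpa using P.add_left 0 0 b

theorem zero_right (a : R) : P.bracket a 0 = 0 := by
  rw [P.antisymm, P.zero_left, neg_zero]

end CommRing

variable {k Q : Type*} [CommRing k] [Field Q] [Algebra k Q] (P : PoissonBracket k Q)

theorem div_right (u c : Q) {e : Q} (he : e ≠ 0) :
    P.bracket u (c / e) * e ^ 2 = P.bracket u c * e - P.bracket u e * c := by
  have hc : c / e * e = c := div_mul_cancel₀ c he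
  have h := P.leibniz u (c / e) e
  rw [hc] at h
  linear_combination -(e * h) - P.bracket u e * hc

theorem div_left (a : Q) {b : Q} (hb : b ≠ 0) (v : Q) :
    P.bracket (a / b) v * b ^ 2 = P.bracket a v * b - P.bracket b v * a := by
  rw [P.antisymm (a / b), P.antisymm a, P.antisymm b]
  linear_combination -P.div_right v a hb

theorem div_div (a : Q) {b : Q} (hb : b ≠ 0) (c : Q) {e : Q} (he : e ≠ 0) :
    P.bracket (a / b) (c / e) * (b ^ 2 * e ^ 2) =
      P.bracket a c * (b * e) - P.bracket b c * (a * e) - P.bracket a e * (b * c) +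
        P.bracket b e * (a * c) := by
  have h₁ := P.div_right (a / b) c he
  have h₂ := P.div_left a hb c
  have h₃ := P.div_left a hb e
  linear_combination b ^ 2 * h₁ + e * h₂ - c * h₃

theorem add_le_valuation_bracket_of_forall_eq_div (ν : AddValuation Q (WithTop ℤ)) (w : ℤ)
    {S : Set Q} (hS : ∀ a ∈ S, ∀ b ∈ S, ν a + ν b ≤ ν (P.bracket a b) + w)
    (hfrac : ∀ x : Q, ∃ a ∈ S, ∃ b ∈ S, b ≠ 0 ∧ x = a / b) (x y : Q) :
    ν x + ν y ≤ ν (P.bracket x y) + w := by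
  obtain ⟨a, ha, b, hb, hb0, rfl⟩ := hfrac x
  obtain ⟨c, hc, e, he, he0, rfl⟩ := hfrac y
  set T := ν a + ν b + ν c + ν e with hT
  have hterm : ∀ s ∈ S, ∀ t ∈ S, ∀ u v : Q, T = ν s + ν t + ν u + ν v →
      T ≤ ν (P.bracket s t * (u * v)) + w := by
    intro s hs t ht u v hsum
    calc T = ν s + ν t + (ν u + ν v) := by rw [hsum, add_assoc]
      _ ≤ ν (P.bracket s t) + w + (ν u + ν v) := add_le_add (hS s hs t ht) le_rfl
      _ = ν (P.bracket s t * (u * v)) + w := by rw [ν.map_mul, ν.map_mul]; abel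
  have hadd : ∀ s t : Q, T ≤ ν s + w → T ≤ ν t + w → T ≤ ν (s + t) + w := fun s t hs ht =>
    (le_min hs ht).trans (by rw [min_add_add_right]; exact add_le_add (ν.map_add s t) le_rfl)
  have hsub : ∀ s t : Q, T ≤ ν s + w → T ≤ ν t + w → T ≤ ν (s - t) + w := fun s t hs ht => by
    rw [sub_eq_add_neg]; exact hadd s (-t) hs (by rwa [ν.map_neg])
  have hN : T ≤ ν (P.bracket (a / b) (c / e) * (b ^ 2 * e ^ 2)) + w := by
    rw [P.div_div a hb0 c he0]
    refine hadd _ _ (hsub _ _ (hsub _ _ ?_ ?_) ?_) ?_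
    · exact hterm a ha c hc b e (by rw [hT]; abel)
    · exact hterm b hb c hc a e (by rw [hT]; abel)
    · exact hterm a ha e he b c (by rw [hT]; abel)
    · exact hterm b hb e he a c (by rw [hT]; abel)
  have hquot : ∀ s t : Q, t ≠ 0 → ν s = ν (s / t) + ν t := fun s t ht => by
    rw [← ν.map_mul, div_mul_cancel₀ s ht]
  have hD : ν (b ^ 2 * e ^ 2) ≠ ⊤ := ν.ne_top_iff.2 (by positivity)
  rw [← WithTop.add_le_add_iff_right hD]
  calc ν (a / b) + ν (c / e) + ν (b ^ 2 * e ^ 2) = T := by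
        simp only [hT, hquot a b hb0, hquot c e he0, ν.map_mul, ν.map_pow]; abel
    _ ≤ ν (P.bracket (a / b) (c / e) * (b ^ 2 * e ^ 2)) + w := hN
    _ = ν (P.bracket (a / b) (c / e)) + w + ν (b ^ 2 * e ^ 2) := by rw [ν.map_mul]; abel

end PoissonBracket

theorem Subalgebra.isFractionRing_of_forall_eq_div {k K : Type*} [CommRing k] [Field K]
    [Algebra k K] (A : Subalgebra k K) (h : ∀ x : K, ∃ a ∈ A, ∃ b ∈ A, b ≠ 0 ∧ x = a / b) :
    IsFractionRing A K := by
  rw [IsFractionRing, isLocalization_iff]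
  refine ⟨fun y => ?_, fun z => ?_, fun {x y} hxy => ⟨1, ?_⟩⟩
  · exact IsUnit.mk0 _ fun hy => nonZeroDivisors.ne_zero y.2 (Subtype.ext hy)
  · obtain ⟨a, ha, b, hb, hb0, rfl⟩ := h z
    exact ⟨(⟨a, ha⟩, ⟨⟨b, hb⟩, mem_nonZeroDivisors_of_ne_zero fun h => hb0 congr($h.1)⟩),
      div_mul_cancel₀ a hb0⟩
  · rw [Subtype.ext hxy]

theorem AddValuation.exists_extend_of_isFractionRing {A K Γ : Type*} [CommRing A] [Nontrivial A]
    [Field K] [Algebra A K] [IsFractionRing A K] [LinearOrderedAddCommGroupWithTop Γ]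
    (v : AddValuation A Γ) (hv : ∀ a, v a = ⊤ → a = 0) :
    ∃ ν : AddValuation K Γ, ∀ a, ν (algebraMap A K a) = v a := by
  -- `AddValuation A Γ` unfolds to a valuation into the group with zero `Multiplicative Γᵒᵈ`.
  let v' : Valuation A (Multiplicative Γᵒᵈ) := v
  refine ⟨v'.extendToLocalization (S := nonZeroDivisors A) (fun s hs => ?_) K,
    fun a => v'.extendToLocalization_apply_map_apply _ _ a⟩
  exact fun h => nonZeroDivisors.ne_zero hs (hv s h)

section Filtration

variable {k R : Type*} [CommRing k] [Ring R] [Algebra k R]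

theorem exists_mem_notMem_succ_of_ne_zero {F : ℤ → Submodule k R} (hF : Antitone F)
    (hsep : ∀ a : R, (∀ i : ℤ, a ∈ F i) → a = 0) {a : R} (hex : ∃ i : ℤ, a ∈ F i)
    (ha : a ≠ 0) : ∃ i : ℤ, a ∈ F i ∧ a ∉ F (i + 1) := by
  by_contra! hstep
  obtain ⟨i₀, hi₀⟩ := hex
  refine ha (hsep a fun i => ?_)
  rcases le_total i i₀ with hi | hi
  · exact hF hi hi₀
  · exact Int.leInduction (motive := fun j _ => a ∈ F j) hi₀ (fun j _ => hstep j) i hi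

def IsDegreeFunction (F : ℤ → Submodule k R) (A : Subalgebra k R) (deg : R → WithTop ℤ) :
    Prop :=
  ∀ a ∈ A, ∀ i : ℤ, (i : WithTop ℤ) ≤ deg a ↔ a ∈ F i

namespace IsDegreeFunction

variable {F : ℤ → Submodule k R} {A : Subalgebra k R} {deg : R → WithTop ℤ} {a b : R}

theorem of_exact_level (hF : Antitone F) (hsep : ∀ a : R, (∀ i : ℤ, a ∈ F i) → a = 0)
    (hexh : ∀ a ∈ A, ∃ i : ℤ, a ∈ F i) (hdeg0 : deg 0 = ⊤)
    (hdeg : ∀ a ∈ A, a ≠ 0 → ∀ i : ℤ, deg a = (i : WithTop ℤ) ↔ (a ∈ F i ∧ a ∉ F (i + 1))) :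
    IsDegreeFunction F A deg := by
  intro a ha i
  rcases eq_or_ne a 0 with rfl | ha0
  · simp [hdeg0]
  obtain ⟨d, hmem, hnotMem⟩ := exists_mem_notMem_succ_of_ne_zero hF hsep (hexh a ha) ha0
  rw [(hdeg a ha ha0 d).2 ⟨hmem, hnotMem⟩, WithTop.coe_le_coe]
  refine ⟨fun hid => hF hid hmem, fun hi => ?_⟩
  by_contra! hdi
  exact hnotMem (hF (Int.add_one_le_of_lt hdi) hi)

theorem deg_zero (hd : IsDegreeFunction F A deg) : deg 0 = ⊤ :=
  WithTop.eq_top_iff_forall_ge.2 fun i => (hd 0 A.zero_mem i).2 (F i).zero_mem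

theorem deg_eq_top_iff (hd : IsDegreeFunction F A deg)
    (hsep : ∀ a : R, (∀ i : ℤ, a ∈ F i) → a = 0) (ha : a ∈ A) : deg a = ⊤ ↔ a = 0 := by
  refine ⟨fun htop => hsep a fun i => (hd a ha i).1 (htop ▸ le_top), ?_⟩
  rintro rfl
  exact hd.deg_zero

theorem exists_deg_eq_coe (hd : IsDegreeFunction F A deg)
    (hsep : ∀ a : R, (∀ i : ℤ, a ∈ F i) → a = 0) (ha : a ∈ A) (ha0 : a ≠ 0) :
    ∃ i : ℤ, deg a = i := by
  obtain ⟨i, hi⟩ := WithTop.ne_top_iff_exists.1 ((hd.deg_eq_top_iff hsep ha).not.2 ha0)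
  exact ⟨i, hi.symm⟩

theorem deg_eq_coe_iff (hd : IsDegreeFunction F A deg) (ha : a ∈ A) (i : ℤ) :
    deg a = i ↔ a ∈ F i ∧ a ∉ F (i + 1) := by
  rw [← hd a ha, ← hd a ha]
  induction deg a using WithTop.recTopCoe with
  | top => simp
  | coe d => rw [WithTop.coe_le_coe, WithTop.coe_le_coe, WithTop.coe_inj]; omega

theorem min_le_deg_add (hd : IsDegreeFunction F A deg) (ha : a ∈ A) (hb : b ∈ A) :
    min (deg a) (deg b) ≤ deg (a + b) := by
  refine WithTop.forall_coe_le_iff_le.1 fun i hi => (hd _ (add_mem ha hb) i).2 ?_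
  exact add_mem ((hd a ha i).1 (hi.trans (min_le_left _ _)))
    ((hd b hb i).1 (hi.trans (min_le_right _ _)))

theorem deg_smul (hd : IsDegreeFunction F A deg) (ha : a ∈ A) {c : k} (hc : IsUnit c) :
    deg (c • a) = deg a :=
  WithTop.eq_of_forall_coe_le_iff fun i => by
    rw [hd _ (A.smul_mem ha c), hd a ha, Submodule.smul_mem_iff_of_isUnit _ hc]

theorem deg_mul (hd : IsDegreeFunction F A deg) (hsep : ∀ a : R, (∀ i : ℤ, a ∈ F i) → a = 0)
    (hmul : ∀ (i j : ℤ) (a b : R), a ∈ F i → b ∈ F j → a * b ∈ F (i + j))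
    (hdom : ∀ (i j : ℤ) (a b : R), a ∈ F i → a ∉ F (i + 1) → b ∈ F j →
      b ∉ F (j + 1) → a * b ∉ F (i + j + 1))
    (ha : a ∈ A) (hb : b ∈ A) : deg (a * b) = deg a + deg b := by
  rcases eq_or_ne a 0 with rfl | ha0
  · rw [zero_mul, hd.deg_zero, top_add]
  rcases eq_or_ne b 0 with rfl | hb0
  · rw [mul_zero, hd.deg_zero, add_top]
  obtain ⟨i, hi⟩ := hd.exists_deg_eq_coe hsep ha ha0
  obtain ⟨j, hj⟩ := hd.exists_deg_eq_coe hsep hb hb0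
  obtain ⟨hai, hai'⟩ := (hd.deg_eq_coe_iff ha i).1 hi
  obtain ⟨hbj, hbj'⟩ := (hd.deg_eq_coe_iff hb j).1 hj
  rw [hi, hj, ← WithTop.coe_add, hd.deg_eq_coe_iff (mul_mem ha hb)]
  exact ⟨hmul i j a b hai hbj, hdom i j a b hai hai' hbj hbj'⟩

theorem deg_one [Nontrivial R] (hd : IsDegreeFunction F A deg)
    (hsep : ∀ a : R, (∀ i : ℤ, a ∈ F i) → a = 0)
    (hmul : ∀ (i j : ℤ) (a b : R), a ∈ F i → b ∈ F j → a * b ∈ F (i + j))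
    (hdom : ∀ (i j : ℤ) (a b : R), a ∈ F i → a ∉ F (i + 1) → b ∈ F j →
      b ∉ F (j + 1) → a * b ∉ F (i + j + 1)) :
    deg 1 = 0 := by
  have hsq : deg 1 = deg 1 + deg 1 := by
    simpa using hd.deg_mul hsep hmul hdom A.one_mem A.one_mem
  obtain ⟨d, hd1⟩ := hd.exists_deg_eq_coe hsep A.one_mem one_ne_zero
  rw [hd1] at hsq ⊢
  norm_cast at hsq ⊢
  omega

def toAddValuation [Nontrivial R] (hd : IsDegreeFunction F A deg)
    (hsep : ∀ a : R, (∀ i : ℤ, a ∈ F i) → a = 0)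
    (hmul : ∀ (i j : ℤ) (a b : R), a ∈ F i → b ∈ F j → a * b ∈ F (i + j))
    (hdom : ∀ (i j : ℤ) (a b : R), a ∈ F i → a ∉ F (i + 1) → b ∈ F j →
      b ∉ F (j + 1) → a * b ∉ F (i + j + 1)) :
    AddValuation A (WithTop ℤ) :=
  AddValuation.of (fun a => deg a) hd.deg_zero (hd.deg_one hsep hmul hdom)
    (fun a b => hd.min_le_deg_add a.2 b.2) (fun a b => hd.deg_mul hsep hmul hdom a.2 b.2)

end IsDegreeFunction

end Filtration

theorem IsDegreeFunction.add_le_deg_bracket {k R : Type*} [CommRing k] [CommRing R]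
    [Algebra k R] {F : ℤ → Submodule k R} {A : Subalgebra k R} {deg : R → WithTop ℤ}
    (hd : IsDegreeFunction F A deg) (hsep : ∀ a : R, (∀ i : ℤ, a ∈ F i) → a = 0)
    (P : PoissonBracket k R) (hAbr : ∀ a ∈ A, ∀ b ∈ A, P.bracket a b ∈ A) {w : ℤ}
    (hw : ∀ (i j : ℤ) (a b : R), a ∈ F i → b ∈ F j → P.bracket a b ∈ F (i + j - w))
    {a b : R} (ha : a ∈ A) (hb : b ∈ A) :
    deg a + deg b ≤ deg (P.bracket a b) + w := by
  rcases eq_or_ne a 0 with rfl | ha0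
  · rw [P.zero_left, hd.deg_zero, top_add, top_add]
  rcases eq_or_ne b 0 with rfl | hb0
  · rw [P.zero_right, hd.deg_zero, add_top, top_add]
  obtain ⟨i, hi⟩ := hd.exists_deg_eq_coe hsep ha ha0
  obtain ⟨j, hj⟩ := hd.exists_deg_eq_coe hsep hb hb0
  have hai : a ∈ F i := (hd a ha i).1 hi.ge
  have hbj : b ∈ F j := (hd b hb j).1 hj.ge
  have hbr := (hd _ (hAbr a ha b hb) _).2 (hw i j a b hai hbj)
  rw [hi, hj]
  generalize deg (P.bracket a b) = d at hbr ⊢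
  induction d using WithTop.recTopCoe with
  | top => simp
  | coe d => norm_cast at hbr ⊢; omega

theorem stmt8_general (k Q : Type*) [Field k] [Field Q] [Algebra k Q]
    (P : PoissonBracket k Q) (A : Subalgebra k Q)
    (hAbr : ∀ a ∈ A, ∀ b ∈ A, P.bracket a b ∈ A)
    (hfrac : ∀ x : Q, ∃ a ∈ A, ∃ b ∈ A, b ≠ 0 ∧ x = a / b)
    (w : ℤ) (F : ℤ → Submodule k Q)
    (hdesc : ∀ i : ℤ, F (i + 1) ≤ F i)
    (hmul : ∀ (i j : ℤ) (a b : Q), a ∈ F i → b ∈ F j → a * b ∈ F (i + j))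
    (hsep : ∀ a : Q, (∀ i : ℤ, a ∈ F i) → a = 0)
    (hexh : ∀ a ∈ A, ∃ i : ℤ, a ∈ F i)
    -- `gr_F A` is a domain (the filtration is good):
    (hdom : ∀ (i j : ℤ) (a b : Q), a ∈ F i → a ∉ F (i + 1) → b ∈ F j →
      b ∉ F (j + 1) → a * b ∉ F (i + j + 1))
    -- the filtration is a `w`-filtration:
    (hw : ∀ (i j : ℤ) (a b : Q), a ∈ F i → b ∈ F j →
      P.bracket a b ∈ F (i + j - w))
    -- `deg` is the degree function of `F` on `A`:
    (deg : Q → WithTop ℤ) (hdeg0 : deg 0 = ⊤)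
    (hdeg : ∀ a ∈ A, a ≠ 0 → ∀ i : ℤ,
      deg a = (i : WithTop ℤ) ↔ (a ∈ F i ∧ a ∉ F (i + 1))) :
    ∃ ν : Q → WithTop ℤ,
      -- `ν = deg_Q` is well defined by the quotient rule
      (∀ a ∈ A, ∀ b ∈ A, b ≠ 0 → ν (a / b) + deg b = deg a) ∧
      -- `ν` is a valuation on `Q`
      (∀ x : Q, ν x = ⊤ ↔ x = 0) ∧
      (∀ c : k, c ≠ 0 → ν (algebraMap k Q c) = 0) ∧
      (∀ x y : Q, ν (x * y) = ν x + ν y) ∧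
      (∀ x y : Q, min (ν x) (ν y) ≤ ν (x + y)) ∧
      -- and it is a `w`-valuation
      (∀ x y : Q, ν x + ν y ≤ ν (P.bracket x y) + (w : WithTop ℤ)) := by
  have hd : IsDegreeFunction F A deg :=
    .of_exact_level (antitone_int_of_succ_le hdesc) hsep hexh hdeg0 hdeg
  have := A.isFractionRing_of_forall_eq_div hfrac
  obtain ⟨ν, hνA⟩ : ∃ ν : AddValuation Q (WithTop ℤ), ∀ a : A, ν a = deg a :=
    (hd.toAddValuation hsep hmul hdom).exists_extend_of_isFractionRing
      fun a ha => Subtype.ext ((hd.deg_eq_top_iff hsep a.2).1 ha)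
  have hν : ∀ a ∈ A, ν a = deg a := fun a ha => hνA ⟨a, ha⟩
  refine ⟨ν, fun a ha b hb hb0 => ?_, fun x => ν.top_iff, fun c hc => ?_, ν.map_mul, ν.map_add,
    P.add_le_valuation_bracket_of_forall_eq_div ν w (fun a ha b hb => ?_) hfrac⟩
  · rw [← hν a ha, ← hν b hb, ← ν.map_mul, div_mul_cancel₀ a hb0]
  · rw [hν _ (A.algebraMap_mem c), Algebra.algebraMap_eq_smul_one, hd.deg_smul A.one_mem hc.isUnit,
      hd.deg_one hsep hmul hdom]
  · rw [hν a ha, hν b hb, hν _ (hAbr a ha b hb)]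
    exact hd.add_le_deg_bracket hsep P hAbr hw ha hb

/-- let `A` be a Poisson domain with fraction field `Q` (here `Q`
is a Poisson field and `A ⊆ Q` a Poisson subalgebra of which `Q` is the
fraction field), and let `deg` be the valuation on `A` coming from a good
`w`-filtration `F` of `A` (i.e. `gr_F A` is a domain and
`{F i, F j} ⊆ F (i+j-w)`).  Then `deg_Q (a b⁻¹) = deg a − deg b` is a
well-defined `w`-valuation on `Q`: there is a function `ν : Q → ℤ ∪ {∞}`
satisfying `ν (a/b) + deg b = deg a` for `a, b ∈ A`, `b ≠ 0`, which is a
valuation and satisfies `ν u + ν v ≤ ν {u,v} + w` for all `u, v ∈ Q`. -/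
theorem stmt8 (k Q : Type*) [Field k] [Field Q] [Algebra k Q]
    (P : PoissonBracket k Q) (A : Subalgebra k Q)
    (hAbr : ∀ a ∈ A, ∀ b ∈ A, P.bracket a b ∈ A)
    (hfrac : ∀ x : Q, ∃ a ∈ A, ∃ b ∈ A, b ≠ 0 ∧ x = a / b)
    (w : ℤ) (F : ℤ → Submodule k Q)
    (hFA : ∀ i : ℤ, F i ≤ A.toSubmodule)
    (hdesc : ∀ i : ℤ, F (i + 1) ≤ F i)
    (hone : (1 : Q) ∈ F 0) (hone' : (1 : Q) ∉ F 1)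
    (hmul : ∀ (i j : ℤ) (a b : Q), a ∈ F i → b ∈ F j → a * b ∈ F (i + j))
    (hsep : ∀ a : Q, (∀ i : ℤ, a ∈ F i) → a = 0)
    (hexh : ∀ a ∈ A, ∃ i : ℤ, a ∈ F i)
    -- `gr_F A` is a domain (the filtration is good):
    (hdom : ∀ (i j : ℤ) (a b : Q), a ∈ F i → a ∉ F (i + 1) → b ∈ F j →
      b ∉ F (j + 1) → a * b ∉ F (i + j + 1))
    -- the filtration is a `w`-filtration:
    (hw : ∀ (i j : ℤ) (a b : Q), a ∈ F i → b ∈ F j →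
      P.bracket a b ∈ F (i + j - w))
    -- `deg` is the degree function of `F` on `A`:
    (deg : Q → WithTop ℤ) (hdeg0 : deg 0 = ⊤)
    (hdeg : ∀ a ∈ A, a ≠ 0 → ∀ i : ℤ,
      deg a = (i : WithTop ℤ) ↔ (a ∈ F i ∧ a ∉ F (i + 1))) :
    ∃ ν : Q → WithTop ℤ,
      -- `ν = deg_Q` is well defined by the quotient rule
      (∀ a ∈ A, ∀ b ∈ A, b ≠ 0 → ν (a / b) + deg b = deg a) ∧
      -- `ν` is a valuation on `Q`
      (∀ x : Q, ν x = ⊤ ↔ x = 0) ∧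
      (∀ c : k, c ≠ 0 → ν (algebraMap k Q c) = 0) ∧
      (∀ x y : Q, ν (x * y) = ν x + ν y) ∧
      (∀ x y : Q, min (ν x) (ν y) ≤ ν (x + y)) ∧
      -- and it is a `w`-valuation
      (∀ x y : Q, ν x + ν y ≤ ν (P.bracket x y) + (w : WithTop ℤ)) :=
  stmt8_general k Q P A hAbr hfrac w F hdesc hmul hsep hexh hdom hw deg hdeg0 hdeg
end

section
/- Let K be a Poisson field over a field k of characteristic zero containing nonzero elements x, y, z with {x,y} = 3z² + λxy, {y,z} = 3x² + λyz, {z,x} = 3y² + λxz for some λ ∈ k. Then for any 0-valuation ν on K, ν(x) = ν(y) = ν(z). -/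
/-- let `K` be a Poisson field over a field `k` of characteristic
zero containing nonzero elements `x, y, z` with `{x,y} = 3z² + λxy`,
`{y,z} = 3x² + λyz`, `{z,x} = 3y² + λxz` for some `λ ∈ k`.  Then every
0-valuation `ν` on `K` satisfies `ν x = ν y = ν z`. -/
theorem stmt10 (k K : Type*) [Field k] [CharZero k] [Field K] [Algebra k K]
    (P : PoissonBracket k K) (lam : k) (x y z : K)
    (hx : x ≠ 0) (hy : y ≠ 0) (hz : z ≠ 0)
    (h1 : P.bracket x y = 3 * z ^ 2 + algebraMap k K lam * (x * y))
    (h2 : P.bracket y z = 3 * x ^ 2 + algebraMap k K lam * (y * z))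
    (h3 : P.bracket z x = 3 * y ^ 2 + algebraMap k K lam * (z * x))
    (ν : K → WithTop ℤ)
    (hν0 : ∀ a : K, ν a = ⊤ ↔ a = 0)
    (hνc : ∀ c : k, c ≠ 0 → ν (algebraMap k K c) = 0)
    (hνm : ∀ a b : K, ν (a * b) = ν a + ν b)
    (hνa : ∀ a b : K, min (ν a) (ν b) ≤ ν (a + b))
    -- `ν` is a 0-valuation:
    (hνbr : ∀ a b : K, ν a + ν b ≤ ν (P.bracket a b)) :
    ν x = ν y ∧ ν y = ν z := by

  have h3K : ν (3 : K) = 0 := by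
    have : ((3 : K)) = algebraMap k K 3 := by rw [map_ofNat]
    rw [this]
    exact hνc 3 (by norm_num)
  have hneg : ∀ t : K, ν (-t) = ν t := by
    intro t
    have hm1 : ν (-1 : K) = 0 := by
      have : ((-1 : K)) = algebraMap k K (-1) := by simp
      rw [this]
      exact hνc (-1) (by norm_num)
    have := hνm (-1) t
    simpa [hm1] using this
  have key : ∀ u v w : K,
      P.bracket u v = 3 * w ^ 2 + algebraMap k K lam * (u * v) →
      ν u + ν v ≤ ν w + ν w := by
    intro u v w hbr
    have hw2 : ν (3 * w ^ 2) = ν w + ν w := by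
      rw [hνm, h3K, sq, hνm, zero_add]
    rw [← hw2]
    by_cases hlam : lam = 0
    · have : P.bracket u v = 3 * w ^ 2 := by simp [hbr, hlam]
      rw [← this]; exact hνbr u v
    · have heq : (3 : K) * w ^ 2 = P.bracket u v + -(algebraMap k K lam * (u * v)) := by
        rw [hbr]; ring
      have hl : ν (-(algebraMap k K lam * (u * v))) = ν u + ν v := by
        rw [hneg, hνm, hνm, hνc lam hlam, zero_add]
      calc ν u + ν v
          ≤ min (ν (P.bracket u v)) (ν (-(algebraMap k K lam * (u * v)))) := by
            exact le_min (hνbr u v) (le_of_eq hl.symm)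
        _ ≤ ν (P.bracket u v + -(algebraMap k K lam * (u * v))) := hνa _ _
        _ = ν (3 * w ^ 2) := by rw [← heq]
  have hxt : ν x ≠ ⊤ := fun h => hx ((hν0 x).mp h)
  have hyt : ν y ≠ ⊤ := fun h => hy ((hν0 y).mp h)
  have hzt : ν z ≠ ⊤ := fun h => hz ((hν0 z).mp h)
  obtain ⟨a, ha⟩ := WithTop.ne_top_iff_exists.mp hxt
  obtain ⟨b, hb⟩ := WithTop.ne_top_iff_exists.mp hyt
  obtain ⟨c, hc⟩ := WithTop.ne_top_iff_exists.mp hzt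
  have k1 := key x y z h1
  have k2 := key y z x h2
  have k3 := key z x y h3
  rw [← ha, ← hb, ← hc] at k1 k2 k3 ⊢
  rw [← WithTop.coe_add, ← WithTop.coe_add, WithTop.coe_le_coe] at k1 k2 k3
  constructor <;> · rw [WithTop.coe_eq_coe]; omega
end

section
/- Let K be a Poisson field over a field k of characteristic zero containing nonzero elements x, y, z with {x,y} = 3z², {y,z} = 3x², {z,x} = 3y². Then there is no w-valuation on K for any integer w < 0. -/
/-- let `K` be a Poisson field over a field `k` of characteristic
zero containing nonzero elements `x, y, z` with `{x,y} = 3z²`, `{y,z} = 3x²`,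
`{z,x} = 3y²`.  Then for every integer `w < 0` there is no `w`-valuation on
`K`: no valuation `ν` on `K` satisfies `ν {a,b} ≥ ν a + ν b − w` for all
`a, b`. -/
theorem stmt11 (k K : Type*) [Field k] [CharZero k] [Field K] [Algebra k K]
    (P : PoissonBracket k K) (x y z : K)
    (hx : x ≠ 0) (hy : y ≠ 0) (hz : z ≠ 0)
    (h1 : P.bracket x y = 3 * z ^ 2)
    (h2 : P.bracket y z = 3 * x ^ 2)
    (h3 : P.bracket z x = 3 * y ^ 2) :
    ∀ w : ℤ, w < 0 →
      ∀ ν : K → WithTop ℤ,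
        (∀ a : K, ν a = ⊤ ↔ a = 0) →
        (∀ c : k, c ≠ 0 → ν (algebraMap k K c) = 0) →
        (∀ a b : K, ν (a * b) = ν a + ν b) →
        (∀ a b : K, min (ν a) (ν b) ≤ ν (a + b)) →
        ¬ (∀ a b : K, ν a + ν b ≤ ν (P.bracket a b) + (w : WithTop ℤ)) := by
  intro w hw ν htop hsc hmul hadd hbr
  have h3K : (3 : K) = algebraMap k K (3 : k) := by
    simp [map_ofNat]
  have hν3 : ν (3 : K) = 0 := by
    rw [h3K]; exact hsc 3 (by norm_num)
  have key : ∀ u v t : K, P.bracket u v = 3 * t ^ 2 →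
      ν u + ν v ≤ ν t + ν t + (w : WithTop ℤ) := by
    intro u v t h
    have := hbr u v
    rw [h] at this
    rw [hmul, hν3, sq, hmul, zero_add] at this
    exact this
  obtain ⟨a, ha⟩ := WithTop.ne_top_iff_exists.mp ((htop x).not.mpr hx)
  obtain ⟨b, hb⟩ := WithTop.ne_top_iff_exists.mp ((htop y).not.mpr hy)
  obtain ⟨c, hc⟩ := WithTop.ne_top_iff_exists.mp ((htop z).not.mpr hz)
  have k1 := key x y z h1
  have k2 := key y z x h2
  have k3 := key z x y h3
  rw [← ha, ← hb, ← hc] at k1 k2 k3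
  have k1' : a + b ≤ c + c + w := by exact_mod_cast k1
  have k2' : b + c ≤ a + a + w := by exact_mod_cast k2
  have k3' : c + a ≤ b + b + w := by exact_mod_cast k3
  omega
end

section
/- Let k have characteristic zero, Ω ∈ k[x,y,z] homogeneous, and A_Ω the Poisson polynomial algebra with {f,g} = det(Jacobian of (f,g,Ω)). Let φ be a graded algebra automorphism of k[x,y,z] with Jacobian determinant J(φ) = det(∂(φ(x),φ(y),φ(z))/∂(x,y,z)) and suppose φ(Ω) = aΩ for some a ∈ k^×. Then for all f, g ∈ A_Ω: φ({f,g}) = a·J(φ)^{-1}·{φ(f), φ(g)}. In particular, φ is a Poisson automorphism of A_Ω if and only if φ(Ω) = J(φ)·Ω. -/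
/-!
The bracket is a Jacobian determinant, so the chain rule `J(φ ∘ F) = φ(J(F)) · J(φ)` applied to
`F = (f, g, Ω)` gives `φ({f,g}_Ω) · J(φ) = {φ f, φ g}_{φ Ω} = a {φ f, φ g}_Ω`. Hence `φ` is Poisson
exactly when `J(φ) = a`, provided some bracket is nonzero; this holds because, by Euler's identity
`∑ xᵢ ∂ᵢΩ = d Ω`, a nonzero form `Ω` of positive degree has a nonzero partial derivative, and
`∂ᵢΩ` is the bracket of the two other coordinates taken in cyclic order.
-/

open MvPolynomial

/-- The Jacobian-determinant Poisson bracket on `k[x,y,z]` with potential `Ω`: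
`{f, g} = det (∂(f,g,Ω)/∂(x,y,z))`. -/
noncomputable def jb {k : Type*} [CommRing k]
    (Ω f g : MvPolynomial (Fin 3) k) : MvPolynomial (Fin 3) k :=
  pderiv 0 f * (pderiv 1 g * pderiv 2 Ω - pderiv 2 g * pderiv 1 Ω)
  - pderiv 1 f * (pderiv 0 g * pderiv 2 Ω - pderiv 2 g * pderiv 0 Ω)
  + pderiv 2 f * (pderiv 0 g * pderiv 1 Ω - pderiv 1 g * pderiv 0 Ω)

/-- The Jacobian determinant `J(φ) = det (∂(φ(x), φ(y), φ(z))/∂(x,y,z))` of an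
endomorphism `φ` of `k[x,y,z]`. -/
noncomputable def jdet {k : Type*} [CommRing k]
    (φ : MvPolynomial (Fin 3) k →ₐ[k] MvPolynomial (Fin 3) k) :
    MvPolynomial (Fin 3) k :=
  Matrix.det (Matrix.of fun i j : Fin 3 => pderiv j (φ (X i)))

namespace MvPolynomial

variable {R σ τ ι : Type*} [CommSemiring R]

noncomputable def jacobianMatrix (F : ι → MvPolynomial σ R) : Matrix ι σ (MvPolynomial σ R) :=
  Matrix.of fun i j => pderiv j (F i)

theorem pderiv_algHom_apply [Fintype σ] (ψ : MvPolynomial σ R →ₐ[R] MvPolynomial τ R) (j : τ)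
    (p : MvPolynomial σ R) :
    pderiv j (ψ p) = ∑ i, ψ (pderiv i p) * pderiv j (ψ (X i)) := by
  classical
  induction p using MvPolynomial.induction_on with
  | C c => simp
  | add p q hp hq => simp [hp, hq, add_mul, Finset.sum_add_distrib]
  | mul_X p n ih =>
    have hterm : ∀ i, ψ (pderiv i (p * X n)) * pderiv j (ψ (X i)) =
        ψ (pderiv i p) * pderiv j (ψ (X i)) * ψ (X n) +
          if n = i then ψ p * pderiv j (ψ (X i)) else 0 := by
      intro i
      rcases eq_or_ne n i with rfl | h
      · simp
        ring
      · simp [pderiv_X_of_ne h, h]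
        ring
    rw [map_mul, pderiv_mul, ih]
    simp only [hterm, Finset.sum_add_distrib, Finset.sum_ite_eq, Finset.mem_univ, if_true,
      ← Finset.sum_mul]

theorem jacobianMatrix_algHom_comp [Fintype σ] (ψ : MvPolynomial σ R →ₐ[R] MvPolynomial τ R)
    (F : ι → MvPolynomial σ R) :
    jacobianMatrix (ψ ∘ F) = (jacobianMatrix F).map ψ * jacobianMatrix (fun i => ψ (X i)) := by
  ext i j
  simp only [jacobianMatrix, Matrix.of_apply, Function.comp_apply, pderiv_algHom_apply ψ j (F i),
    Matrix.mul_apply, Matrix.map_apply]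

theorem IsHomogeneous.exists_pderiv_ne_zero {R : Type*} [CommRing R] [IsDomain R] [CharZero R]
    [Fintype σ] {Ω : MvPolynomial σ R} {d : ℕ} (hΩ : Ω.IsHomogeneous d) (hΩ0 : Ω ≠ 0)
    (hd : d ≠ 0) : ∃ i, pderiv i Ω ≠ 0 := by
  by_contra! h
  have := hΩ.sum_X_mul_pderiv
  simp only [h, mul_zero, Finset.sum_const_zero, eq_comm, smul_eq_zero] at this
  exact this.elim hd hΩ0

end MvPolynomial

section Bracket

variable {k : Type*} [CommRing k]

theorem jb_eq_det_jacobianMatrix (Ω f g : MvPolynomial (Fin 3) k) :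
    jb Ω f g = (jacobianMatrix ![f, g, Ω]).det := by
  simp [jb, jacobianMatrix, Matrix.det_fin_three]
  ring

theorem jdet_eq_det_jacobianMatrix (φ : MvPolynomial (Fin 3) k →ₐ[k] MvPolynomial (Fin 3) k) :
    jdet φ = (jacobianMatrix fun i => φ (X i)).det :=
  rfl

theorem map_jb_mul_jdet (φ : MvPolynomial (Fin 3) k →ₐ[k] MvPolynomial (Fin 3) k)
    (Ω f g : MvPolynomial (Fin 3) k) :
    φ (jb Ω f g) * jdet φ = jb (φ Ω) (φ f) (φ g) := by
  have hcomp : ![φ f, φ g, φ Ω] = φ ∘ ![f, g, Ω] := by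
    ext i; fin_cases i <;> rfl
  rw [jb_eq_det_jacobianMatrix, jb_eq_det_jacobianMatrix, jdet_eq_det_jacobianMatrix,
    hcomp, jacobianMatrix_algHom_comp, Matrix.det_mul, AlgHom.map_det]
  rfl

theorem jb_smul_left (c : k) (Ω f g : MvPolynomial (Fin 3) k) :
    jb (c • Ω) f g = c • jb Ω f g := by
  simp only [jb, smul_eq_C_mul, pderiv_C_mul]
  ring

theorem exists_jb_ne_zero {Ω : MvPolynomial (Fin 3) k} (h : ∃ i, pderiv i Ω ≠ 0) :
    ∃ f g, jb Ω f g ≠ 0 := by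
  obtain ⟨i, hi⟩ := h
  fin_cases i
  · exact ⟨X 1, X 2, by simpa [jb, pderiv_X] using hi⟩
  · exact ⟨X 2, X 0, by simpa [jb, pderiv_X] using hi⟩
  · exact ⟨X 0, X 1, by simpa [jb, pderiv_X] using hi⟩

theorem forall_map_jb_eq_iff_jdet_eq [IsDomain k]
    {φ : MvPolynomial (Fin 3) k →ₐ[k] MvPolynomial (Fin 3) k} (hφ : Function.Injective φ)
    {Ω : MvPolynomial (Fin 3) k} (hΩ : ∃ f g, jb Ω f g ≠ 0) {c : k} (hc : c ≠ 0)
    (hφΩ : φ Ω = c • Ω) :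
    (∀ f g, φ (jb Ω f g) = jb Ω (φ f) (φ g)) ↔ jdet φ = C c := by
  have key (f g : MvPolynomial (Fin 3) k) :
      φ (jb Ω f g) * jdet φ = C c * jb Ω (φ f) (φ g) := by
    rw [map_jb_mul_jdet, hφΩ, jb_smul_left, smul_eq_C_mul]
  constructor
  · intro hφ_poisson
    obtain ⟨f, g, hfg⟩ := hΩ
    have := key f g
    rw [← hφ_poisson, mul_comm (C c)] at this
    exact mul_left_cancel₀ ((map_ne_zero_iff φ hφ).mpr hfg) this
  · intro hJ f g
    have := key f g
    rw [hJ, mul_comm] at this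
    exact mul_left_cancel₀ (C_ne_zero.mpr hc) this

end Bracket

theorem stmt19_general (k : Type*) [Field k] [CharZero k]
    (Ω : MvPolynomial (Fin 3) k) (d : ℕ) (hΩ : Ω.IsHomogeneous d)
    -- `Ω` is a (nonzero, non-constant) potential, cf. Construction 0.6:
    (hΩ0 : Ω ≠ 0) (hd : 0 < d)
    (φ : MvPolynomial (Fin 3) k ≃ₐ[k] MvPolynomial (Fin 3) k)
    (a : k) (hφΩ : φ Ω = a • Ω) :
    (∀ f g : MvPolynomial (Fin 3) k,
      φ (jb Ω f g) * jdet (φ : MvPolynomial (Fin 3) k →ₐ[k] MvPolynomial (Fin 3) k)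
        = a • jb Ω (φ f) (φ g)) ∧
    ((∀ f g : MvPolynomial (Fin 3) k, φ (jb Ω f g) = jb Ω (φ f) (φ g)) ↔
      φ Ω = jdet (φ : MvPolynomial (Fin 3) k →ₐ[k] MvPolynomial (Fin 3) k) * Ω) := by
  have ha : a ≠ 0 := by
    rintro rfl
    rw [zero_smul, map_eq_zero_iff φ φ.injective] at hφΩ
    exact hΩ0 hφΩ
  have hJ : φ Ω = jdet φ * Ω ↔ jdet φ = C a := by
    rw [hφΩ, smul_eq_C_mul, eq_comm]
    exact mul_left_inj' hΩ0
  refine ⟨fun f g => ?_, ?_⟩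
  · rw [← jb_smul_left, ← hφΩ]
    exact map_jb_mul_jdet (φ : MvPolynomial (Fin 3) k →ₐ[k] MvPolynomial (Fin 3) k) Ω f g
  · rw [hJ]
    exact forall_map_jb_eq_iff_jdet_eq (φ := φ) φ.injective
      (exists_jb_ne_zero (hΩ.exists_pderiv_ne_zero hΩ0 hd.ne')) ha hφΩ

/-- let `k` have characteristic zero, `Ω ∈ k[x,y,z]` (non-constant)
homogeneous, and `A_Ω` the Poisson polynomial algebra with bracket
`{f,g} = det ∂(f,g,Ω)`.  Let `φ` be a graded algebra automorphism of `k[x,y,z]`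
with `φ(Ω) = a Ω` for some `a ∈ k^×`.  Then for all `f, g`:
`φ({f,g}) = a · J(φ)^{-1} · {φ(f), φ(g)}` (stated multiplicatively as
`φ({f,g}) · J(φ) = a · {φ(f), φ(g)}`, `J(φ)` being a unit).  In particular,
`φ` is a Poisson automorphism of `A_Ω` if and only if `φ(Ω) = J(φ) · Ω`. -/
theorem stmt19 (k : Type*) [Field k] [CharZero k]
    (Ω : MvPolynomial (Fin 3) k) (d : ℕ) (hΩ : Ω.IsHomogeneous d)
    -- `Ω` is a (nonzero, non-constant) potential, cf. Construction 0.6: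
    (hΩ0 : Ω ≠ 0) (hd : 0 < d)
    (φ : MvPolynomial (Fin 3) k ≃ₐ[k] MvPolynomial (Fin 3) k)
    -- `φ` is graded:
    (hgr : ∀ (n : ℕ) (f : MvPolynomial (Fin 3) k),
      f.IsHomogeneous n → (φ f).IsHomogeneous n)
    (a : k) (ha : a ≠ 0) (hφΩ : φ Ω = a • Ω) :
    (∀ f g : MvPolynomial (Fin 3) k,
      φ (jb Ω f g) * jdet (φ : MvPolynomial (Fin 3) k →ₐ[k] MvPolynomial (Fin 3) k)
        = a • jb Ω (φ f) (φ g)) ∧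
    ((∀ f g : MvPolynomial (Fin 3) k, φ (jb Ω f g) = jb Ω (φ f) (φ g)) ↔
      φ Ω = jdet (φ : MvPolynomial (Fin 3) k →ₐ[k] MvPolynomial (Fin 3) k) * Ω) :=
  stmt19_general k Ω d hΩ hΩ0 hd φ a hφΩ
end
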